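/- Let p be a prime and R a perfect 𝔽_p-algebra with the trivial norm, and let W(R) carry the normalized p-adic norm. Then the map λ : ℳ(R) → ℳ(W(R)), sending a multiplicative seminorm α bounded by the trivial norm to the seminorm λ(α)(∑ p^i [x_i]) = sup_i p^{−i} α(x_i), is continuous for the topologies of pointwise convergence on ℳ(R) and ℳ(W(R)). -/

import Mathlib

/-!
`λ(α)(x)` is the supremum of the functions `α ↦ p⁻ⁱ α(xᵢ)`, each continuous for pointwise
convergence. Since `α ≤ 1` on `R`, the `i`-th term is at most `p⁻ⁱ` uniformly in `α`, so the
finite partial suprema converge to `λ(α)(x)` uniformly in `α`, and a uniform limit of continuous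
functions is continuous.
-/

open scoped NNReal

/-- A multiplicative (nonarchimedean) seminorm on a commutative ring. -/
def IsMultSeminorm {A : Type*} [CommRing A] (α : A → ℝ≥0) : Prop :=
  α 0 = 0 ∧ (∀ g h : A, α (g - h) ≤ max (α g) (α h)) ∧
    α 1 = 1 ∧ ∀ g h : A, α (g * h) = α g * α h

/-- The trivial norm on a ring: `0 ↦ 0` and every nonzero element to `1`. -/
noncomputable def trivialNorm {A : Type*} [CommRing A] (a : A) : ℝ≥0 :=
  open scoped Classical in
  if a = 0 then 0 else 1

/-- For `R` a perfect `𝔽_p`-algebra and `x ∈ W(R)` with Teichmüller expansion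
`x = ∑_{i≥0} p^i [x_i]`, this is `x_i`: the unique `p^i`-th root in `R` of the
`i`-th Witt coordinate of `x`. -/
noncomputable def teichCoeff (p : ℕ) [Fact p.Prime] {R : Type*} [CommRing R]
    [ExpChar R p] [PerfectRing R p] (x : WittVector p R) (i : ℕ) : R :=
  (⇑(frobeniusEquiv R p).symm)^[i] (x.coeff i)

/-- The normalized `p`-adic norm on `W(R)`: it sends `0` to `0` and a nonzero
`x = ∑ p^i [x_i]` to `p^{-j}`, where `j` is the least index with `x_j ≠ 0`. -/
noncomputable def padicNormWitt (p : ℕ) [Fact p.Prime] {R : Type*} [CommRing R]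
    [ExpChar R p] [PerfectRing R p] (x : WittVector p R) : ℝ≥0 :=
  ⨆ i : ℕ, (p : ℝ≥0)⁻¹ ^ i * trivialNorm (teichCoeff p x i)

/-- The map `λ` on seminorms: `λ(α)(∑ p^i [x_i]) = sup_i p^{-i} α(x_i)`. -/
noncomputable def lambdaSeminorm (p : ℕ) [Fact p.Prime] {R : Type*} [CommRing R]
    [ExpChar R p] [PerfectRing R p] (α : R → ℝ≥0) (x : WittVector p R) : ℝ≥0 :=
  ⨆ i : ℕ, (p : ℝ≥0)⁻¹ ^ i * α (teichCoeff p x i)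

/-- The map `μ` on seminorms: `μ(β)(x) = β([x])`, with `[·]` the Teichmüller map. -/
noncomputable def muSeminorm (p : ℕ) [Fact p.Prime] {R : Type*} [CommRing R]
    (β : WittVector p R → ℝ≥0) (x : R) : ℝ≥0 :=
  β (WittVector.teichmuller p x)

/-- The Gel'fand spectrum of `R` with the trivial norm, topologized by
pointwise convergence. -/
def SpectrumTrivial (R : Type*) [CommRing R] : Type _ :=
  {α : R → ℝ≥0 // IsMultSeminorm α ∧ ∀ r : R, α r ≤ trivialNorm r}

instance (R : Type*) [CommRing R] : TopologicalSpace (SpectrumTrivial R) :=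
  instTopologicalSpaceSubtype

open Filter Finset Topology

section UniformSupremum

variable {X : Type*} {f : ℕ → X → ℝ≥0} {b : ℕ → ℝ≥0}

theorem iSup_le_finsetSup_range_add (hfb : ∀ i x, f i x ≤ b i) {n : ℕ} {ε : ℝ≥0}
    (hε : ∀ i ≥ n, b i ≤ ε) (x : X) :
    ⨆ i, f i x ≤ (range n).sup (fun i => f i x) + ε := by
  refine ciSup_le fun i => ?_
  rcases lt_or_ge i n with hi | hi
  · exact (le_sup (f := fun i => f i x) (mem_range.2 hi)).trans le_self_add
  · exact (hfb i x).trans ((hε i hi).trans le_add_self)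

theorem tendstoUniformly_finsetSup_range (hb : Tendsto b atTop (𝓝 0))
    (hfb : ∀ i x, f i x ≤ b i) :
    TendstoUniformly (fun n x => (range n).sup fun i => f i x) (fun x => ⨆ i, f i x) atTop := by
  rw [Metric.tendstoUniformly_iff]
  intro ε hε
  lift ε to ℝ≥0 using hε.le
  obtain ⟨N, hN⟩ := eventually_atTop.1 (hb.eventually (ge_mem_nhds (half_pos hε)))
  obtain ⟨B, hB⟩ := hb.bddAbove_range
  filter_upwards [eventually_ge_atTop N] with n hn x
  have hbdd : BddAbove (Set.range fun i => f i x) :=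
    ⟨B, Set.forall_mem_range.2 fun i => (hfb i x).trans (hB ⟨i, rfl⟩)⟩
  set S := ⨆ i, f i x
  set F := (range n).sup fun i => f i x
  have hlower : F ≤ S := Finset.sup_le fun i _ => le_ciSup hbdd i
  have hupper : S ≤ F + ε / 2 :=
    iSup_le_finsetSup_range_add hfb (fun i hi => hN i (hn.trans hi)) x
  rw [NNReal.dist_eq, abs_sub_lt_iff]
  have h1 : (F : ℝ) ≤ S := by exact_mod_cast hlower
  have h2 : (S : ℝ) ≤ F + ε / 2 := by exact_mod_cast hupper
  constructor <;> linarith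

theorem continuous_iSup_of_le_of_tendsto_zero [TopologicalSpace X] (hf : ∀ i, Continuous (f i))
    (hb : Tendsto b atTop (𝓝 0)) (hfb : ∀ i x, f i x ≤ b i) :
    Continuous fun x => ⨆ i, f i x :=
  (tendstoUniformly_finsetSup_range hb hfb).continuous <|
    Frequently.of_forall fun _ => Continuous.finset_sup_apply fun i _ => hf i

end UniformSupremum

theorem trivialNorm_le_one {A : Type*} [CommRing A] (a : A) : trivialNorm a ≤ 1 := by
  unfold trivialNorm
  split_ifs <;> simp

theorem SpectrumTrivial.apply_le_one {R : Type*} [CommRing R] (α : SpectrumTrivial R) (r : R) :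
    α.1 r ≤ 1 :=
  (α.2.2 r).trans (trivialNorm_le_one r)

theorem lambda_continuous (p : ℕ) [Fact p.Prime] {R : Type*}
    [CommRing R] [ExpChar R p] [PerfectRing R p] :
    Continuous (fun α : SpectrumTrivial R =>
      (fun x : WittVector p R => lambdaSeminorm p α.1 x)) := by
  have hp : (p : ℝ≥0)⁻¹ < 1 :=
    inv_lt_one_of_one_lt₀ (by exact_mod_cast (Fact.out : p.Prime).one_lt)
  exact continuous_pi fun x => continuous_iSup_of_le_of_tendsto_zero
    (fun i => continuous_const.mul ((continuous_apply _).comp continuous_subtype_val))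
    (NNReal.tendsto_pow_atTop_nhds_zero_of_lt_one hp)
    (fun i α => mul_le_of_le_one_right' (α.apply_le_one _))
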